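/- arXiv:1312.4820 — 8 statements merged into one kernel-verified Lean document; each statement's English description precedes it below -/
import Mathlib

section
/- Let L ≥ 1 be a natural number, let ρ > 0 and J_u > 0 be real numbers, and let γ_1, …, γ_L be arbitrary real numbers. Let A be the (L+2)×(L+2) real matrix whose entries are all zero except A(0,1) = −1/ρ, A(1,0) = −1/J_u and A(ℓ+1,0) = −γ_ℓ for ℓ = 1, …, L. Then the characteristic polynomial of A equals X^L · (X² − 1/(ρ J_u)); in particular, the eigenvalues of A are 0 with algebraic multiplicity L and ±1/√(ρ J_u), each with multiplicity 1, independently of the values γ_1, …, γ_L. -/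
open Polynomial

/-! Splitting the state into (v, σ) and the memory variables (φ_ℓ), the columns of the φ_ℓ vanish,
so `A` is block lower triangular with a zero diagonal block on the memory variables. Its
characteristic polynomial is therefore `X ^ L` times that of the acoustic block `!![0, -1/ρ; -1/Ju, 0]`,
and the `γ_ℓ`, lying in the off-diagonal block, drop out. -/

namespace Matrix

variable {R m n : Type*} [CommRing R] [Fintype m] [Fintype n] [DecidableEq m] [DecidableEq n]

theorem charpoly_eq_mul_X_pow_of_toBlocks₁₂_of_toBlocks₂₂ (M : Matrix (m ⊕ n) (m ⊕ n) R)
    (h₁₂ : M.toBlocks₁₂ = 0) (h₂₂ : M.toBlocks₂₂ = 0) :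
    M.charpoly = M.toBlocks₁₁.charpoly * X ^ Fintype.card n := by
  conv_lhs => rw [← fromBlocks_toBlocks M, h₁₂, h₂₂]
  rw [charpoly_fromBlocks_zero₁₂, charpoly_zero]

theorem charpoly_antidiagonal_fin_two [Nontrivial R] (a b : R) :
    !![0, a; b, 0].charpoly = X ^ 2 - C (a * b) := by
  rw [charpoly_fin_two, trace_fin_two_of, det_fin_two_of]
  simp only [add_zero, map_zero, zero_mul, sub_zero, zero_sub, map_neg]
  ring

end Matrix

theorem Polynomial.roots_X_pow_mul_X_sq_sub_C {a : ℝ} (ha : 0 ≤ a) (n : ℕ) :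
    (X ^ n * (X ^ 2 - C a)).roots = Multiset.replicate n 0 + {√a, -√a} := by
  have hfactor : (X ^ 2 - C a : ℝ[X]) = (X - C √a) * (X - C (-√a)) := by
    have hC : C a = C √a * C √a := by rw [← C_mul, Real.mul_self_sqrt ha]
    rw [C_neg, hC]
    ring
  rw [hfactor, roots_mul, roots_mul, roots_X_pow, roots_X_sub_C, roots_X_sub_C,
    Multiset.nsmul_singleton]
  · rfl
  · exact mul_ne_zero (X_sub_C_ne_zero _) (X_sub_C_ne_zero _)
  · exact mul_ne_zero (pow_ne_zero _ X_ne_zero)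
      (mul_ne_zero (X_sub_C_ne_zero _) (X_sub_C_ne_zero _))

theorem stmt_0 (L : ℕ) (ρ Ju : ℝ) (hρ : 0 < ρ) (hJ : 0 < Ju)
    (γ : Fin L → ℝ) (A : Matrix (Fin (L + 2)) (Fin (L + 2)) ℝ)
    (hA : ∀ i j : Fin (L + 2), A i j =
      if (i : ℕ) = 0 ∧ (j : ℕ) = 1 then -1 / ρ
      else if (i : ℕ) = 1 ∧ (j : ℕ) = 0 then -1 / Ju
      else if h : 2 ≤ (i : ℕ) ∧ (j : ℕ) = 0 then
        -γ ⟨(i : ℕ) - 2, by have := i.isLt; omega⟩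
      else 0) :
    A.charpoly = X ^ L * (X ^ 2 - C (1 / (ρ * Ju))) ∧
    A.charpoly.roots =
      Multiset.replicate L (0 : ℝ) +
        {1 / Real.sqrt (ρ * Ju), -(1 / Real.sqrt (ρ * Ju))} := by
  let e : Fin 2 ⊕ Fin L ≃ Fin (L + 2) := finSumFinEquiv.trans (finCongr (Nat.add_comm 2 L))
  set B := Matrix.reindex e.symm e.symm A
  have he₁ (i : Fin 2) : (e (Sum.inl i) : ℕ) = i := rfl
  have he₂ (i : Fin L) : (e (Sum.inr i) : ℕ) = 2 + i := rfl
  have h₁₁ : B.toBlocks₁₁ = !![0, -1 / ρ; -1 / Ju, 0] := by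
    ext i j
    fin_cases i <;> fin_cases j <;> simp [B, Matrix.toBlocks₁₁, hA, he₁]
  have h₁₂ : B.toBlocks₁₂ = 0 := by
    ext i j
    have h : (2 + (j : ℕ)) ≠ 1 := by omega
    simp [B, Matrix.toBlocks₁₂, hA, he₁, he₂, h]
  have h₂₂ : B.toBlocks₂₂ = 0 := by
    ext i j
    simp [B, Matrix.toBlocks₂₂, hA, he₂]
  have hchar : A.charpoly = X ^ L * (X ^ 2 - C (1 / (ρ * Ju))) := by
    rw [← Matrix.charpoly_reindex e.symm,
      Matrix.charpoly_eq_mul_X_pow_of_toBlocks₁₂_of_toBlocks₂₂ B h₁₂ h₂₂, h₁₁, Matrix.charpoly_antidiagonal_fin_two, Fintype.card_fin, mul_comm]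
    congr 3
    field_simp
  refine ⟨hchar, ?_⟩
  rw [hchar, Polynomial.roots_X_pow_mul_X_sq_sub_C (by positivity), one_div, Real.sqrt_inv, one_div]
end

section
/- Given L ≥ 1, real parameters J_u > 0, η ≠ 0, A ∈ ℝ, 0 < α < 1, pairwise distinct nodes θ_1, …, θ_L > 0 and weights μ_1, …, μ_L ∈ ℝ, set γ_ℓ = (2 sin(πα)/(π J_u)) θ_ℓ^{1−2α} and Υ_ℓ = A Γ(1+α) γ_ℓ, and let S be the (L+2)×(L+2) real matrix whose row 0 and column 0 are zero and whose remaining entries are S(1,1) = −1/(J_u η), S(1,1+ℓ) = −A Γ(1+α) μ_ℓ / J_u, S(1+ℓ,1) = −γ_ℓ/η, and S(1+ℓ,1+j) = −Υ_ℓ μ_j − θ_ℓ² δ_{ℓj}. Then for every k ∈ {1, …, L}, det(S − (−θ_k²) I) = −(2 sin(πα) A Γ(1+α)/(π J_u)) · μ_k · θ_k^{5−2α} · ∏_{j ≠ k}(θ_k² − θ_j²). -/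
/-
Since `Υ_ℓ = A Γ(1+α) γ_ℓ`, the matrix `S + θ_k² I` is a diagonal matrix plus a rank-one
matrix `w rᵀ`, with diagonal `(θ_k², θ_k², θ_k² - θ_1², …, θ_k² - θ_L²)`,
`w = (0, 1, J_u γ_1, …, J_u γ_L)` and `r = (0, -1/(J_u η), -A Γ(1+α) μ_1/J_u, …)`.
The diagonal vanishes at the index `p` of `φ_k`, and for such a matrix the determinant is
`w_p r_p ∏_{i ≠ p} d_i`.
-/

open Finset Matrix

theorem Fin.prod_univ_erase_succ {M : Type*} [CommMonoid M] {n : ℕ} (f : Fin (n + 1) → M)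
    (k : Fin n) : ∏ i ∈ univ.erase k.succ, f i = f 0 * ∏ i ∈ univ.erase k, f i.succ := by
  rw [Fin.univ_succ, erase_cons_of_ne _ (Fin.succ_ne_zero k).symm, Finset.prod_cons]
  erw [← map_erase, prod_map]
  rfl

theorem Matrix.det_diagonal_add_vecMulVec_of_eq_zero {R n : Type*}
    [CommRing R] [Fintype n] [DecidableEq n] (d w r : n → R) {p : n} (hp : d p = 0) :
    (diagonal d + vecMulVec w r).det = w p * r p * ∏ i ∈ univ.erase p, d i := by
  -- Column `p` is `r p • w`; once `r p` is factored out, subtracting multiples of that column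
  -- clears the rank-one part of the others, leaving `diagonal d` with column `p` replaced by `w`.
  set r' := Function.update r p 0
  have h_factor :
      diagonal d + vecMulVec w r = updateCol (diagonal d + vecMulVec w r') p (r p • w) := by
    ext i j
    by_cases hj : j = p
    · subst hj
      by_cases hi : i = j
      · simp [hi, hp, vecMulVec_apply, mul_comm]
      · simp [hi, vecMulVec_apply, mul_comm]
    · simp [hj, r', vecMulVec_apply]
  have h_colOps : updateCol (diagonal d + vecMulVec w r') p w =
      updateCol (diagonal d) p w * (1 + vecMulVec (Pi.single p 1) r') := by
    rw [Matrix.mul_add, Matrix.mul_one, mul_vecMulVec, mulVec_single_one]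
    ext i j
    by_cases hj : j = p
    · subst hj; simp [r', vecMulVec_apply]
    · simp [hj, r', vecMulVec_apply]
  rw [h_factor, det_updateCol_smul, h_colOps, det_mul, vecMulVec_eq Unit,
    det_one_add_replicateCol_mul_replicateRow,
    ← cramer_apply, cramer_eq_adjugate_mulVec, adjugate_diagonal, mulVec_diagonal]
  simp only [dotProduct_single, Function.update_self, mul_one, add_zero, r']
  ring

theorem stmt_2 (L : ℕ) (Ju η A α : ℝ) (hJ : 0 < Ju)
    (θ μ γ Υ : Fin L → ℝ) (hθ : ∀ ℓ, 0 < θ ℓ)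
    (hγ : ∀ ℓ, γ ℓ = (2 * Real.sin (Real.pi * α) / (Real.pi * Ju)) * θ ℓ ^ (1 - 2 * α))
    (hΥ : ∀ ℓ, Υ ℓ = A * Real.Gamma (1 + α) * γ ℓ)
    (S : Matrix (Fin (L + 2)) (Fin (L + 2)) ℝ)
    (hS : ∀ i j : Fin (L + 2), S i j =
      if (i : ℕ) = 0 ∨ (j : ℕ) = 0 then 0
      else if (i : ℕ) = 1 ∧ (j : ℕ) = 1 then -1 / (Ju * η)
      else if h : (i : ℕ) = 1 ∧ 2 ≤ (j : ℕ) then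
        -A * Real.Gamma (1 + α) * μ ⟨(j : ℕ) - 2, by have := j.isLt; omega⟩ / Ju
      else if h : 2 ≤ (i : ℕ) ∧ (j : ℕ) = 1 then
        -γ ⟨(i : ℕ) - 2, by have := i.isLt; omega⟩ / η
      else if h : 2 ≤ (i : ℕ) ∧ 2 ≤ (j : ℕ) then
        -Υ ⟨(i : ℕ) - 2, by have := i.isLt; omega⟩ * μ ⟨(j : ℕ) - 2, by have := j.isLt; omega⟩
          - (θ ⟨(i : ℕ) - 2, by have := i.isLt; omega⟩) ^ 2 * (if i = j then 1 else 0)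
      else 0) :
    ∀ k : Fin L, (S - (-(θ k) ^ 2) • (1 : Matrix (Fin (L + 2)) (Fin (L + 2)) ℝ)).det =
      -(2 * Real.sin (Real.pi * α) * A * Real.Gamma (1 + α) / (Real.pi * Ju)) * μ k
        * θ k ^ (5 - 2 * α) * ∏ j ∈ Finset.univ.erase k, ((θ k) ^ 2 - (θ j) ^ 2) := by
  intro k
  set G := Real.Gamma (1 + α)
  have hM : S - (-(θ k) ^ 2) • (1 : Matrix (Fin (L + 2)) (Fin (L + 2)) ℝ) =
      diagonal (vecCons (θ k ^ 2) (vecCons (θ k ^ 2) fun ℓ => θ k ^ 2 - θ ℓ ^ 2)) +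
        vecMulVec (vecCons 0 (vecCons 1 fun ℓ => Ju * γ ℓ))
          (vecCons 0 (vecCons (-1 / (Ju * η)) fun ℓ => -A * G * μ ℓ / Ju)) := by
    ext i j
    rw [Matrix.sub_apply, hS, Matrix.smul_apply, one_apply, Matrix.add_apply, diagonal_apply,
      vecMulVec_apply]
    refine Fin.cases ?_ (Fin.cases ?_ fun l => ?_) i <;>
      refine Fin.cases ?_ (Fin.cases ?_ fun m => ?_) j <;> simp [Fin.ext_iff, hΥ] <;> grind
  have hpow : θ k ^ (5 - 2 * α) = θ k ^ 2 * θ k ^ 2 * θ k ^ (1 - 2 * α) := by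
    rw [show (5 : ℝ) - 2 * α = (4 : ℕ) + (1 - 2 * α) by push_cast; ring,
      Real.rpow_add (hθ k), Real.rpow_natCast]
    ring
  rw [hM, det_diagonal_add_vecMulVec_of_eq_zero _ _ _ (p := k.succ.succ) (by simp),
    Fin.prod_univ_erase_succ, Fin.prod_univ_erase_succ]
  simp only [cons_val_zero, cons_val_succ]
  rw [hpow, hγ k]
  field_simp
end

section
/- Let J_u > 0, γ > 0 and θ > 0 be real numbers, and let σ, φ : ℝ → ℝ be differentiable functions satisfying φ'(t) = −θ² φ(t) + J_u γ σ'(t) for all t ∈ ℝ. Then for every t ∈ ℝ, φ(t) σ(t) = φ(t)²/(J_u γ) + (γ/(2θ²)) · d/dt [ ( √J_u · σ(t) − φ(t)/(√J_u · γ) )² ]. -/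
/-!
Writing `J_u = s²` with `s = √J_u`, the diffusive equation turns the derivative of the deviation
`u = s σ - φ / (s γ)` into `θ² φ / (s γ)`: the `σ'` terms cancel. Hence
`(γ / (2θ²)) (u²)' = u φ / s = φ σ - φ² / (J_u γ)`.
-/

theorem hasDerivAt_diffusive_deviation {s γ θ t σ' : ℝ} {σ φ : ℝ → ℝ} (hs : s ≠ 0) (hγ : γ ≠ 0)
    (hσ : HasDerivAt σ σ' t) (hφ : HasDerivAt φ (-θ ^ 2 * φ t + s ^ 2 * γ * σ') t) :
    HasDerivAt (fun r => s * σ r - φ r / (s * γ)) (θ ^ 2 * φ t / (s * γ)) t := by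
  refine ((hσ.const_mul s).sub (hφ.div_const (s * γ))).congr_deriv ?_
  field_simp
  ring

theorem stmt_5 (Ju γ θ : ℝ) (hJ : 0 < Ju) (hγ : 0 < γ) (hθ : 0 < θ)
    (σ φ : ℝ → ℝ) (hσ : Differentiable ℝ σ) (hφ : Differentiable ℝ φ)
    (hode : ∀ t : ℝ, deriv φ t = -θ ^ 2 * φ t + Ju * γ * deriv σ t) :
    ∀ t : ℝ, φ t * σ t =
      (φ t) ^ 2 / (Ju * γ) + (γ / (2 * θ ^ 2)) *
        deriv (fun s => (Real.sqrt Ju * σ s - φ s / (Real.sqrt Ju * γ)) ^ 2) t := by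
  intro t
  set s := Real.sqrt Ju
  have hs : s ≠ 0 := (Real.sqrt_pos.mpr hJ).ne'
  have hs2 : s ^ 2 = Ju := Real.sq_sqrt hJ.le
  have hφ' : HasDerivAt φ (-θ ^ 2 * φ t + s ^ 2 * γ * deriv σ t) t := by
    rw [hs2, ← hode]
    exact (hφ t).hasDerivAt
  have hu := hasDerivAt_diffusive_deviation hs hγ.ne' (hσ t).hasDerivAt hφ'
  rw [(hu.fun_pow 2).deriv, ← hs2]
  norm_num
  field_simp [hs, hγ.ne', hθ.ne']
  ring
end

section
/- Let ρ, J_u, η, A > 0, 0 < α < 1, L ≥ 1, θ_ℓ > 0 and μ_ℓ > 0 for ℓ = 1, …, L; set γ_ℓ = (2 sin(πα)/(π J_u)) θ_ℓ^{1−2α} and Υ_ℓ = A Γ(1+α) γ_ℓ. Suppose v, σ, φ_1, …, φ_L : ℝ × ℝ → ℝ are continuously differentiable, compactly supported in the space variable x uniformly for t in compact intervals, and satisfy for all (x,t): ∂v/∂t = (1/ρ) ∂σ/∂x; ∂σ/∂t = (1/J_u) ∂v/∂x − σ/(J_u η) − (A Γ(1+α)/J_u) ∑_{j=1}^L μ_j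 φ_j; and ∂φ_ℓ/∂t = γ_ℓ ∂v/∂x − θ_ℓ² φ_ℓ − (γ_ℓ/η) σ − Υ_ℓ ∑_{j=1}^L μ_j φ_j for each ℓ. Define the energy E(t) = ½ ∫_ℝ [ ρ v² + J_u σ² + ∑_{ℓ=1}^L (μ_ℓ Υ_ℓ/θ_ℓ²) ( √J_u σ − φ_ℓ/(√J_u γ_ℓ) )² ] dx. Then E is differentiable and E'(t) = − ∫_ℝ [ σ²/η + ∑_{ℓ=1}^L μ_ℓ Υ_ℓ ( φ_ℓ/(√J_u γ_ℓ) )² ] dx ≤ 0 for all t. -/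
/-
Along a solution, the energy density
`e = ρ v² + Ju σ² + ∑ (μ_ℓ Υ_ℓ / θ_ℓ²) (√Ju σ - φ_ℓ / (√Ju γ_ℓ))²` obeys the local balance
`½ ∂ₜe = ∂ₓ(v σ) - d` with `d = σ² / η + ∑ μ_ℓ Υ_ℓ (φ_ℓ / (√Ju γ_ℓ))²`. The combinations
`√Ju σ - φ_ℓ / (√Ju γ_ℓ)` are chosen so that the elastic, viscous and coupling terms of the
σ- and φ_ℓ-equations cancel in their time derivatives, which are `θ_ℓ² φ_ℓ / (√Ju γ_ℓ)`; the
remaining cross terms cancel because `Υ_ℓ = A Γ(1+α) γ_ℓ`. Compact support in `x` lets one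
differentiate `E` under the integral sign and makes `∫ ∂ₓ(v σ)` vanish, and `d ≥ 0` since
`μ_ℓ, Υ_ℓ > 0`.
-/

open MeasureTheory

open Function Set Finset

section PartialDerivatives

variable {f : ℝ → ℝ → ℝ} {x t : ℝ}

theorem hasDerivAt_uncurry_left (hf : DifferentiableAt ℝ (uncurry f) (x, t)) :
    HasDerivAt (fun y => f y t) (fderiv ℝ (uncurry f) (x, t) (1, 0)) x :=
  hf.hasFDerivAt.comp_hasDerivAt_of_eq x ((hasDerivAt_id x).prodMk (hasDerivAt_const x t)) rfl

theorem differentiableAt_uncurry_right (hf : DifferentiableAt ℝ (uncurry f) (x, t)) :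
    DifferentiableAt ℝ (fun s => f x s) t :=
  hf.comp t ((differentiableAt_const x).prodMk differentiableAt_id)

theorem continuous_deriv_uncurry_left (hf : ContDiff ℝ 1 (uncurry f)) :
    Continuous fun p : ℝ × ℝ => deriv (fun y => f y p.2) p.1 := by
  have hderiv : ∀ p : ℝ × ℝ, deriv (fun y => f y p.2) p.1 = fderiv ℝ (uncurry f) p (1, 0) :=
    fun p => (hasDerivAt_uncurry_left (hf.differentiable one_ne_zero p)).deriv
  simp only [hderiv]
  exact (ContinuousLinearMap.apply ℝ ℝ (1, 0)).continuous.comp (hf.continuous_fderiv one_ne_zero)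

end PartialDerivatives

theorem hasDerivAt_integral_of_continuous_of_compact_support {X : Type*} [TopologicalSpace X]
    [T2Space X] [MeasurableSpace X] [OpensMeasurableSpace X] {μ : Measure X}
    [IsFiniteMeasureOnCompacts μ] {F F' : X → ℝ → ℝ} {K : Set X} {a b t : ℝ}
    (hK : IsCompact K) (ht : t ∈ Ioo a b) (hF : Continuous (uncurry F))
    (hF' : Continuous (uncurry F')) (hderiv : ∀ x, ∀ s ∈ Ioo a b, HasDerivAt (F x) (F' x s) s)
    (hFK : ∀ x ∉ K, F x t = 0) (hF'K : ∀ s ∈ Icc a b, ∀ x ∉ K, F' x s = 0) :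
    HasDerivAt (fun s => ∫ x, F x s ∂μ) (∫ x, F' x t ∂μ) t := by
  have hslice : ∀ {G : X → ℝ → ℝ}, Continuous (uncurry G) → ∀ s, Continuous fun x => G x s :=
    fun hG s => hG.comp (continuous_id.prodMk continuous_const)
  obtain ⟨C, hC⟩ := (hK.prod isCompact_Icc).exists_bound_of_continuousOn hF'.continuousOn
  have hbound : ∀ x, ∀ s ∈ Ioo a b, ‖F' x s‖ ≤ K.indicator (fun _ => C) x := by
    intro x s hs
    by_cases hx : x ∈ K
    · simpa [indicator_of_mem hx] using hC (x, s) ⟨hx, Ioo_subset_Icc_self hs⟩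
    · simp [indicator_of_notMem hx, hF'K s (Ioo_subset_Icc_self hs) x hx]
  exact (hasDerivAt_integral_of_dominated_loc_of_deriv_le (F := fun s x => F x s)
    (Ioo_mem_nhds ht.1 ht.2)
    (.of_forall fun s => (hslice hF s).aestronglyMeasurable)
    ((hslice hF t).integrable_of_hasCompactSupport (HasCompactSupport.intro hK hFK))
    (hslice hF' t).aestronglyMeasurable (.of_forall hbound)
    ((integrable_indicator_iff hK.measurableSet).2 (integrableOn_const hK.measure_lt_top.ne))
    (.of_forall hderiv)).2

theorem integral_deriv_eq_zero_of_hasCompactSupport {f : ℝ → ℝ} (hf : ContDiff ℝ 1 f)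
    (hsupp : HasCompactSupport f) : ∫ x, deriv f x = 0 :=
  integral_eq_zero_of_hasDerivAt_of_integrable
    (fun x => (hf.differentiable one_ne_zero x).hasDerivAt)
    ((hf.continuous_deriv le_rfl).integrable_of_hasCompactSupport hsupp.deriv)
    (hf.continuous.integrable_of_hasCompactSupport hsupp)

section EnergyBalance

variable {L : ℕ} (ρ Ju η : ℝ) (θ μ γ Υ : Fin L → ℝ)

noncomputable section

def energyDensity (v σ : ℝ) (φ : Fin L → ℝ) : ℝ :=
  ρ * v ^ 2 + Ju * σ ^ 2 +
    ∑ ℓ, (μ ℓ * Υ ℓ / θ ℓ ^ 2) * (√Ju * σ - φ ℓ / (√Ju * γ ℓ)) ^ 2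

def dissipationRate (σ : ℝ) (φ : Fin L → ℝ) : ℝ :=
  σ ^ 2 / η + ∑ ℓ, μ ℓ * Υ ℓ * (φ ℓ / (√Ju * γ ℓ)) ^ 2

end

theorem dissipationRate_nonneg (hη : 0 ≤ η) (hμ : ∀ ℓ, 0 ≤ μ ℓ) (hΥ : ∀ ℓ, 0 ≤ Υ ℓ) (σ : ℝ)
    (φ : Fin L → ℝ) : 0 ≤ dissipationRate Ju η μ γ Υ σ φ :=
  add_nonneg (by positivity) (sum_nonneg fun ℓ _ => by have := hμ ℓ; have := hΥ ℓ; positivity)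

theorem hasDerivAt_energyDensity {v σ : ℝ → ℝ} {φ : Fin L → ℝ → ℝ} {v' σ' t : ℝ}
    {φ' : Fin L → ℝ} (hv : HasDerivAt v v' t) (hσ : HasDerivAt σ σ' t)
    (hφ : ∀ ℓ, HasDerivAt (φ ℓ) (φ' ℓ) t) :
    HasDerivAt (fun s => energyDensity ρ Ju θ μ γ Υ (v s) (σ s) (fun ℓ => φ ℓ s))
      (2 * (ρ * v t * v' + Ju * σ t * σ' + ∑ ℓ, (μ ℓ * Υ ℓ / θ ℓ ^ 2) *
        (√Ju * σ t - φ ℓ t / (√Ju * γ ℓ)) * (√Ju * σ' - φ' ℓ / (√Ju * γ ℓ)))) t := by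
  have hsum := HasDerivAt.fun_sum (u := Finset.univ) fun ℓ _ =>
    (((hσ.const_mul √Ju).fun_sub ((hφ ℓ).div_const (√Ju * γ ℓ))).fun_pow 2).const_mul
      (μ ℓ * Υ ℓ / θ ℓ ^ 2)
  refine ((((hv.fun_pow 2).const_mul ρ).fun_add ((hσ.fun_pow 2).const_mul Ju)).fun_add
    hsum).congr_deriv ?_
  simp only [Nat.cast_ofNat, Nat.add_one_sub_one, pow_one, mul_add, mul_sum]
  congr 1
  · ring
  · exact sum_congr rfl fun ℓ _ => by ring

theorem energy_balance (κ : ℝ) (hρ : ρ ≠ 0) (hJu : 0 < Ju) (hθ : ∀ ℓ, θ ℓ ≠ 0)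
    (hγ : ∀ ℓ, γ ℓ ≠ 0) (hΥ : ∀ ℓ, Υ ℓ = κ * γ ℓ) {v σ vₓ σₓ v' σ' : ℝ} {φ φ' : Fin L → ℝ}
    (hv' : v' = 1 / ρ * σₓ)
    (hσ' : σ' = 1 / Ju * vₓ - σ / (Ju * η) - κ / Ju * ∑ j, μ j * φ j)
    (hφ' : ∀ ℓ, φ' ℓ = γ ℓ * vₓ - θ ℓ ^ 2 * φ ℓ - γ ℓ / η * σ - Υ ℓ * ∑ j, μ j * φ j) :
    ρ * v * v' + Ju * σ * σ' + ∑ ℓ, (μ ℓ * Υ ℓ / θ ℓ ^ 2) *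
        (√Ju * σ - φ ℓ / (√Ju * γ ℓ)) * (√Ju * σ' - φ' ℓ / (√Ju * γ ℓ)) =
      vₓ * σ + v * σₓ - dissipationRate Ju η μ γ Υ σ φ := by
  obtain ⟨r, hr, rfl⟩ : ∃ r > 0, Ju = r ^ 2 :=
    ⟨√Ju, Real.sqrt_pos.2 hJu, (Real.sq_sqrt hJu.le).symm⟩
  simp only [dissipationRate, Real.sqrt_sq hr.le]
  set S := ∑ j, μ j * φ j
  have hrelax : ∀ ℓ, r * σ' - φ' ℓ / (r * γ ℓ) = θ ℓ ^ 2 * (φ ℓ / (r * γ ℓ)) := by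
    intro ℓ
    rw [hσ', hφ' ℓ, hΥ ℓ]
    field_simp [hγ ℓ]
    ring
  have hcoupling : ∑ ℓ, μ ℓ * Υ ℓ * (φ ℓ / (r * γ ℓ)) = κ / r * S := by
    rw [mul_sum]
    refine sum_congr rfl fun ℓ _ => ?_
    rw [hΥ ℓ]
    field_simp [hγ ℓ]
  have hterm : ∀ ℓ, μ ℓ * Υ ℓ / θ ℓ ^ 2 * (r * σ - φ ℓ / (r * γ ℓ)) *
      (θ ℓ ^ 2 * (φ ℓ / (r * γ ℓ))) = r * σ * (μ ℓ * Υ ℓ * (φ ℓ / (r * γ ℓ))) -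
        μ ℓ * Υ ℓ * (φ ℓ / (r * γ ℓ)) ^ 2 := by
    intro ℓ
    field_simp [hθ ℓ, hγ ℓ]
  simp only [hrelax, hterm]
  rw [sum_sub_distrib, ← mul_sum, hcoupling, hv', hσ']
  field_simp
  ring

end EnergyBalance

section AndradeSystem

variable {L : ℕ} {ρ Ju η κ : ℝ} {θ μ γ Υ : Fin L → ℝ}

theorem continuous_energyDensity {X : Type*} [TopologicalSpace X] {v σ : X → ℝ}
    {φ : Fin L → X → ℝ} (hv : Continuous v) (hσ : Continuous σ) (hφ : ∀ ℓ, Continuous (φ ℓ)) :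
    Continuous fun p => energyDensity ρ Ju θ μ γ Υ (v p) (σ p) (fun ℓ => φ ℓ p) := by
  unfold energyDensity
  fun_prop

theorem continuous_dissipationRate {X : Type*} [TopologicalSpace X] {σ : X → ℝ}
    {φ : Fin L → X → ℝ} (hσ : Continuous σ) (hφ : ∀ ℓ, Continuous (φ ℓ)) :
    Continuous fun p => dissipationRate Ju η μ γ Υ (σ p) (fun ℓ => φ ℓ p) := by
  unfold dissipationRate
  fun_prop

variable {v σ : ℝ → ℝ → ℝ} {φ : Fin L → ℝ → ℝ → ℝ}

theorem hasDerivAt_energyDensity_of_andrade (hρ : ρ ≠ 0) (hJu : 0 < Ju) (hθ : ∀ ℓ, θ ℓ ≠ 0)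
    (hγ : ∀ ℓ, γ ℓ ≠ 0) (hΥ : ∀ ℓ, Υ ℓ = κ * γ ℓ) {x t : ℝ}
    (hv : DifferentiableAt ℝ (uncurry v) (x, t)) (hσ : DifferentiableAt ℝ (uncurry σ) (x, t))
    (hφ : ∀ ℓ, DifferentiableAt ℝ (uncurry (φ ℓ)) (x, t))
    (heq1 : deriv (fun s => v x s) t = 1 / ρ * deriv (fun y => σ y t) x)
    (heq2 : deriv (fun s => σ x s) t = 1 / Ju * deriv (fun y => v y t) x - σ x t / (Ju * η)
      - κ / Ju * ∑ j, μ j * φ j x t)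
    (heq3 : ∀ ℓ, deriv (fun s => φ ℓ x s) t = γ ℓ * deriv (fun y => v y t) x
      - θ ℓ ^ 2 * φ ℓ x t - γ ℓ / η * σ x t - Υ ℓ * ∑ j, μ j * φ j x t) :
    HasDerivAt (fun s => energyDensity ρ Ju θ μ γ Υ (v x s) (σ x s) (fun ℓ => φ ℓ x s))
      (2 * (deriv (fun y => v y t) x * σ x t + v x t * deriv (fun y => σ y t) x
        - dissipationRate Ju η μ γ Υ (σ x t) (fun ℓ => φ ℓ x t))) t := by
  have h := hasDerivAt_energyDensity ρ Ju θ μ γ Υ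
    (differentiableAt_uncurry_right hv).hasDerivAt (differentiableAt_uncurry_right hσ).hasDerivAt
    fun ℓ => (differentiableAt_uncurry_right (hφ ℓ)).hasDerivAt
  rwa [energy_balance ρ Ju η θ μ γ Υ κ hρ hJu hθ hγ hΥ heq1 heq2 heq3] at h

theorem integral_flux_eq_zero (hv : ContDiff ℝ 1 (uncurry v)) (hσ : ContDiff ℝ 1 (uncurry σ))
    {K : Set ℝ} (hK : IsCompact K) {t : ℝ} (hvK : ∀ x ∉ K, v x t = 0) :
    ∫ x, (deriv (fun y => v y t) x * σ x t + v x t * deriv (fun y => σ y t) x) = 0 := by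
  have hslice : ∀ {f : ℝ → ℝ → ℝ}, ContDiff ℝ 1 (uncurry f) → ContDiff ℝ 1 fun y => f y t :=
    fun hf => hf.comp (contDiff_id.prodMk contDiff_const)
  have hprod : ContDiff ℝ 1 fun y => v y t * σ y t := (hslice hv).mul (hslice hσ)
  rw [← integral_deriv_eq_zero_of_hasCompactSupport hprod
    (HasCompactSupport.intro hK fun x hx => by simp [hvK x hx])]
  congr 1 with x
  exact (((hslice hv).differentiable one_ne_zero x).hasDerivAt.mul
    ((hslice hσ).differentiable one_ne_zero x).hasDerivAt).deriv.symm

theorem hasDerivAt_energy_of_andrade (hρ : ρ ≠ 0) (hJu : 0 < Ju) (hθ : ∀ ℓ, θ ℓ ≠ 0)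
    (hγ : ∀ ℓ, γ ℓ ≠ 0) (hΥ : ∀ ℓ, Υ ℓ = κ * γ ℓ) (hv : ContDiff ℝ 1 (uncurry v))
    (hσ : ContDiff ℝ 1 (uncurry σ)) (hφ : ∀ ℓ, ContDiff ℝ 1 (uncurry (φ ℓ)))
    {K : Set ℝ} (hK : IsCompact K) {a b t : ℝ} (ht : t ∈ Ioo a b)
    (hsupp : ∀ s ∈ Icc a b, ∀ x ∉ K, v x s = 0 ∧ σ x s = 0 ∧ ∀ ℓ, φ ℓ x s = 0)
    (heq1 : ∀ x t, deriv (fun s => v x s) t = 1 / ρ * deriv (fun y => σ y t) x)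
    (heq2 : ∀ x t, deriv (fun s => σ x s) t = 1 / Ju * deriv (fun y => v y t) x
      - σ x t / (Ju * η) - κ / Ju * ∑ j, μ j * φ j x t)
    (heq3 : ∀ ℓ x t, deriv (fun s => φ ℓ x s) t = γ ℓ * deriv (fun y => v y t) x
      - θ ℓ ^ 2 * φ ℓ x t - γ ℓ / η * σ x t - Υ ℓ * ∑ j, μ j * φ j x t) :
    HasDerivAt
      (fun s => 1 / 2 * ∫ x, energyDensity ρ Ju θ μ γ Υ (v x s) (σ x s) (fun ℓ => φ ℓ x s))
      (-∫ x, dissipationRate Ju η μ γ Υ (σ x t) (fun ℓ => φ ℓ x t)) t := by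
  set flux := fun (x s : ℝ) => deriv (fun y => v y s) x * σ x s + v x s * deriv (fun y => σ y s) x
  set D := fun (x s : ℝ) => dissipationRate Ju η μ γ Υ (σ x s) (fun ℓ => φ ℓ x s)
  have hflux : Continuous (uncurry flux) :=
    ((continuous_deriv_uncurry_left hv).mul hσ.continuous).add
      (hv.continuous.mul (continuous_deriv_uncurry_left hσ))
  have hD : Continuous (uncurry D) :=
    continuous_dissipationRate hσ.continuous fun ℓ => (hφ ℓ).continuous
  have hzero : ∀ s ∈ Icc a b, ∀ x ∉ K, flux x s = 0 ∧ D x s = 0 := fun s hs x hx => by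
    obtain ⟨hv0, hσ0, hφ0⟩ := hsupp s hs x hx
    simp [flux, D, dissipationRate, hv0, hσ0, hφ0]
  have hint : ∀ {F : ℝ → ℝ → ℝ}, Continuous (uncurry F) → (∀ x ∉ K, F x t = 0) →
      Integrable fun x => F x t := fun hF hFK =>
    (hF.comp (continuous_id.prodMk continuous_const)).integrable_of_hasCompactSupport
      (HasCompactSupport.intro hK hFK)
  have ht' : t ∈ Icc a b := Ioo_subset_Icc_self ht
  have hE := hasDerivAt_integral_of_continuous_of_compact_support (μ := volume)
    (F := fun x s => energyDensity ρ Ju θ μ γ Υ (v x s) (σ x s) (fun ℓ => φ ℓ x s))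
    (F' := fun x s => 2 * (flux x s - D x s)) hK ht
    (continuous_energyDensity hv.continuous hσ.continuous fun ℓ => (hφ ℓ).continuous)
    (continuous_const.fun_mul (hflux.fun_sub hD))
    (fun x s _ => hasDerivAt_energyDensity_of_andrade hρ hJu hθ hγ hΥ
      (hv.differentiable one_ne_zero _) (hσ.differentiable one_ne_zero _)
      (fun ℓ => (hφ ℓ).differentiable one_ne_zero _) (heq1 x s) (heq2 x s) fun ℓ => heq3 ℓ x s)
    (fun x hx => by
      obtain ⟨hv0, hσ0, hφ0⟩ := hsupp t ht' x hx
      simp [energyDensity, hv0, hσ0, hφ0])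
    fun s hs x hx => by simp only [(hzero s hs x hx).1, (hzero s hs x hx).2, sub_zero, mul_zero]
  refine (hE.const_mul (1 / 2)).congr_deriv ?_
  rw [integral_const_mul, integral_sub (hint hflux fun x hx => (hzero t ht' x hx).1)
    (hint hD fun x hx => (hzero t ht' x hx).2), integral_flux_eq_zero hv hσ hK
    fun x hx => (hsupp t ht' x hx).1]
  ring

end AndradeSystem

theorem stmt_6_general (ρ Ju η A α : ℝ) (hρ : 0 < ρ) (hJ : 0 < Ju) (hη : 0 < η) (hA : 0 < A)
    (hα0 : 0 < α) (hα1 : α < 1) (L : ℕ)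
    (θ μ γ Υ : Fin L → ℝ) (hθ : ∀ ℓ, 0 < θ ℓ) (hμ : ∀ ℓ, 0 < μ ℓ)
    (hγ : ∀ ℓ, γ ℓ = (2 * Real.sin (Real.pi * α) / (Real.pi * Ju)) * θ ℓ ^ (1 - 2 * α))
    (hΥ : ∀ ℓ, Υ ℓ = A * Real.Gamma (1 + α) * γ ℓ)
    (v σ : ℝ → ℝ → ℝ) (φ : Fin L → ℝ → ℝ → ℝ)
    (hv : ContDiff ℝ 1 (Function.uncurry v)) (hσ : ContDiff ℝ 1 (Function.uncurry σ))
    (hφ : ∀ ℓ, ContDiff ℝ 1 (Function.uncurry (φ ℓ)))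
    (hsupp : ∀ a b : ℝ, ∃ R : ℝ, ∀ t ∈ Set.Icc a b, ∀ x : ℝ, R < |x| →
      v x t = 0 ∧ σ x t = 0 ∧ ∀ ℓ, φ ℓ x t = 0)
    (heq1 : ∀ x t : ℝ, deriv (fun s => v x s) t = (1 / ρ) * deriv (fun y => σ y t) x)
    (heq2 : ∀ x t : ℝ, deriv (fun s => σ x s) t =
      (1 / Ju) * deriv (fun y => v y t) x - σ x t / (Ju * η)
        - (A * Real.Gamma (1 + α) / Ju) * ∑ j : Fin L, μ j * φ j x t)
    (heq3 : ∀ (ℓ : Fin L) (x t : ℝ), deriv (fun s => φ ℓ x s) t =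
      γ ℓ * deriv (fun y => v y t) x - θ ℓ ^ 2 * φ ℓ x t - (γ ℓ / η) * σ x t
        - Υ ℓ * ∑ j : Fin L, μ j * φ j x t)
    (E : ℝ → ℝ)
    (hE : ∀ t : ℝ, E t = (1 / 2) * ∫ x : ℝ,
      (ρ * v x t ^ 2 + Ju * σ x t ^ 2 +
        ∑ ℓ : Fin L, (μ ℓ * Υ ℓ / θ ℓ ^ 2) *
          (Real.sqrt Ju * σ x t - φ ℓ x t / (Real.sqrt Ju * γ ℓ)) ^ 2)) :
    ∀ t : ℝ,
      HasDerivAt E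
        (-(∫ x : ℝ, (σ x t ^ 2 / η +
          ∑ ℓ : Fin L, μ ℓ * Υ ℓ * (φ ℓ x t / (Real.sqrt Ju * γ ℓ)) ^ 2))) t ∧
      (-(∫ x : ℝ, (σ x t ^ 2 / η +
          ∑ ℓ : Fin L, μ ℓ * Υ ℓ * (φ ℓ x t / (Real.sqrt Ju * γ ℓ)) ^ 2)) : ℝ) ≤ 0 := by
  intro t
  have hsin : 0 < Real.sin (Real.pi * α) :=
    Real.sin_pos_of_pos_of_lt_pi (by positivity) (by nlinarith [Real.pi_pos])
  have hγpos : ∀ ℓ, 0 < γ ℓ := fun ℓ => by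
    have := hθ ℓ
    rw [hγ ℓ]
    positivity
  have hΥpos : ∀ ℓ, 0 < Υ ℓ := fun ℓ => by
    have := Real.Gamma_pos_of_pos (by linarith : 0 < 1 + α)
    have := hγpos ℓ
    rw [hΥ ℓ]
    positivity
  obtain ⟨R, hR⟩ := hsupp (t - 1) (t + 1)
  refine ⟨?_, neg_nonpos.2 (integral_nonneg fun x => dissipationRate_nonneg Ju η μ γ Υ hη.le
    (fun ℓ => (hμ ℓ).le) (fun ℓ => (hΥpos ℓ).le) _ _)⟩
  rw [show E = _ from funext hE]
  exact hasDerivAt_energy_of_andrade hρ.ne' hJ (fun ℓ => (hθ ℓ).ne') (fun ℓ => (hγpos ℓ).ne') hΥ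
    hv hσ hφ (isCompact_closedBall 0 R) (⟨by linarith, by linarith⟩ : t ∈ Ioo (t - 1) (t + 1))
    (fun s hs x hx => hR s hs x (by simpa using hx)) heq1 heq2 heq3

theorem stmt_6 (ρ Ju η A α : ℝ) (hρ : 0 < ρ) (hJ : 0 < Ju) (hη : 0 < η) (hA : 0 < A)
    (hα0 : 0 < α) (hα1 : α < 1) (L : ℕ) (hL : 1 ≤ L)
    (θ μ γ Υ : Fin L → ℝ) (hθ : ∀ ℓ, 0 < θ ℓ) (hμ : ∀ ℓ, 0 < μ ℓ)
    (hγ : ∀ ℓ, γ ℓ = (2 * Real.sin (Real.pi * α) / (Real.pi * Ju)) * θ ℓ ^ (1 - 2 * α))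
    (hΥ : ∀ ℓ, Υ ℓ = A * Real.Gamma (1 + α) * γ ℓ)
    (v σ : ℝ → ℝ → ℝ) (φ : Fin L → ℝ → ℝ → ℝ)
    (hv : ContDiff ℝ 1 (Function.uncurry v)) (hσ : ContDiff ℝ 1 (Function.uncurry σ))
    (hφ : ∀ ℓ, ContDiff ℝ 1 (Function.uncurry (φ ℓ)))
    (hsupp : ∀ a b : ℝ, ∃ R : ℝ, ∀ t ∈ Set.Icc a b, ∀ x : ℝ, R < |x| →
      v x t = 0 ∧ σ x t = 0 ∧ ∀ ℓ, φ ℓ x t = 0)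
    (heq1 : ∀ x t : ℝ, deriv (fun s => v x s) t = (1 / ρ) * deriv (fun y => σ y t) x)
    (heq2 : ∀ x t : ℝ, deriv (fun s => σ x s) t =
      (1 / Ju) * deriv (fun y => v y t) x - σ x t / (Ju * η)
        - (A * Real.Gamma (1 + α) / Ju) * ∑ j : Fin L, μ j * φ j x t)
    (heq3 : ∀ (ℓ : Fin L) (x t : ℝ), deriv (fun s => φ ℓ x s) t =
      γ ℓ * deriv (fun y => v y t) x - θ ℓ ^ 2 * φ ℓ x t - (γ ℓ / η) * σ x t
        - Υ ℓ * ∑ j : Fin L, μ j * φ j x t)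
    (E : ℝ → ℝ)
    (hE : ∀ t : ℝ, E t = (1 / 2) * ∫ x : ℝ,
      (ρ * v x t ^ 2 + Ju * σ x t ^ 2 +
        ∑ ℓ : Fin L, (μ ℓ * Υ ℓ / θ ℓ ^ 2) *
          (Real.sqrt Ju * σ x t - φ ℓ x t / (Real.sqrt Ju * γ ℓ)) ^ 2)) :
    ∀ t : ℝ,
      HasDerivAt E
        (-(∫ x : ℝ, (σ x t ^ 2 / η +
          ∑ ℓ : Fin L, μ ℓ * Υ ℓ * (φ ℓ x t / (Real.sqrt Ju * γ ℓ)) ^ 2))) t ∧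
      (-(∫ x : ℝ, (σ x t ^ 2 / η +
          ∑ ℓ : Fin L, μ ℓ * Υ ℓ * (φ ℓ x t / (Real.sqrt Ju * γ ℓ)) ^ 2)) : ℝ) ≤ 0 :=
  stmt_6_general ρ Ju η A α hρ hJ hη hA hα0 hα1 L θ μ γ Υ hθ hμ hγ hΥ v σ φ hv hσ hφ hsupp heq1 heq2
    heq3 E hE
end

section
/- Let 0 < α < 1 and let σ : ℝ → ℝ be continuously differentiable with σ(0) = 0. For t ≥ 0 and θ > 0 define the diffusive variable φ(t, θ) = (2 sin(πα)/π) θ^{1−2α} ∫₀^t σ'(τ) e^{−(t−τ)θ²} dτ. Then for every t > 0 the function θ ↦ φ(t, θ) is integrable on (0, +∞) and ∫₀^{+∞} φ(t, θ) dθ = (1/Γ(α)) ∫₀^t (t−τ)^{α−1} σ'(τ) dτ, i.e. the improper integral of the diffusive variable equals the Caputo fractional derivative of σ of order 1−α. -/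
/-!
Integrating in θ first (Fubini–Tonelli), the Gaussian moment
∫₀^∞ θ^{1-2α} e^{-sθ²} dθ = s^{α-1} Γ(1-α)/2, with s = t - τ, turns the inner integral into the
Abel kernel (t-τ)^{α-1}, which is integrable on (0, t) because α > 0; the prefactor
2 sin(πα)/π · Γ(1-α)/2 equals 1/Γ(α) by the reflection formula Γ(α)Γ(1-α) = π / sin(πα).
-/

open MeasureTheory Set Real

lemma integral_Ioi_rpow_mul_exp_neg_mul_sq {α s : ℝ} (hα : α < 1) (hs : 0 < s) :
    ∫ θ in Ioi 0, θ ^ (1 - 2 * α) * exp (-s * θ ^ 2) = s ^ (α - 1) * Gamma (1 - α) / 2 := by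
  have h := integral_rpow_mul_exp_neg_mul_rpow two_pos (by linarith : -1 < 1 - 2 * α) hs
  rw [show -(1 - 2 * α + 1) / 2 = α - 1 by ring, show (1 - 2 * α + 1) / 2 = 1 - α by ring] at h
  simp_rw [← rpow_two, h]
  ring

lemma two_mul_sin_div_pi_mul_Gamma_one_sub {α : ℝ} (hα : sin (π * α) ≠ 0) :
    2 * sin (π * α) / π * (Gamma (1 - α) / 2) = 1 / Gamma α := by
  have hΓ : Gamma α * Gamma (1 - α) = π / sin (π * α) := Gamma_mul_Gamma_one_sub α
  have hΓα : Gamma α ≠ 0 := by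
    rintro h0
    rw [h0, zero_mul] at hΓ
    exact div_ne_zero pi_ne_zero hα hΓ.symm
  rw [eq_div_iff hΓα]
  calc 2 * sin (π * α) / π * (Gamma (1 - α) / 2) * Gamma α
      = sin (π * α) / π * (Gamma α * Gamma (1 - α)) := by ring
    _ = 1 := by rw [hΓ]; field_simp

lemma integrableOn_sub_rpow_mul_Ioo {α t : ℝ} (hα : 0 < α) (ht : 0 ≤ t) {f : ℝ → ℝ}
    (hf : Continuous f) : IntegrableOn (fun τ => (t - τ) ^ (α - 1) * f τ) (Ioo 0 t) := by
  have hrpow : IntervalIntegrable (fun τ => (t - τ) ^ (α - 1)) volume 0 t := by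
    have h := (intervalIntegral.intervalIntegrable_rpow' (a := 0) (b := t) (by linarith : -1 < α - 1)).comp_sub_left t
    rw [sub_zero, sub_self] at h
    exact h.symm
  refine ((hrpow.mul_continuousOn hf.continuousOn).def').mono_set ?_
  rw [uIoc_of_le ht]
  exact Ioo_subset_Ioc_self

lemma integral_Ioi_rpow_mul_const_mul_exp_neg_mul_sq {α s : ℝ} (hα : α < 1) (hs : 0 < s)
    (c : ℝ) :
    ∫ θ in Ioi 0, θ ^ (1 - 2 * α) * (c * exp (-s * θ ^ 2)) =
      c * (s ^ (α - 1) * Gamma (1 - α) / 2) := by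
  simp_rw [mul_left_comm _ c]
  rw [integral_const_mul, integral_Ioi_rpow_mul_exp_neg_mul_sq hα hs]

section Diffusive

variable {α t : ℝ} {f : ℝ → ℝ}

lemma integrable_prod_diffusive (hα0 : 0 < α) (hα1 : α < 1) (ht : 0 ≤ t) (hf : Continuous f) :
    Integrable (fun p : ℝ × ℝ => p.1 ^ (1 - 2 * α) * (f p.2 * exp (-(t - p.2) * p.1 ^ 2)))
      ((volume.restrict (Ioi 0)).prod (volume.restrict (Ioo 0 t))) := by
  rw [integrable_prod_iff' (Measurable.aestronglyMeasurable (by fun_prop))]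
  constructor
  · filter_upwards [ae_restrict_mem measurableSet_Ioo] with τ hτ
    simpa only [mul_left_comm _ (f τ)] using
      (integrableOn_rpow_mul_exp_neg_mul_sq (sub_pos.2 hτ.2) (by linarith)).const_mul (f τ)
  · refine ((integrableOn_sub_rpow_mul_Ioo hα0 ht hf).norm.mul_const
      (Gamma (1 - α) / 2)).congr ?_
    filter_upwards [ae_restrict_mem measurableSet_Ioo] with τ hτ
    have hnorm : ∫ θ in Ioi 0, ‖θ ^ (1 - 2 * α) * (f τ * exp (-(t - τ) * θ ^ 2))‖ =
        ∫ θ in Ioi 0, θ ^ (1 - 2 * α) * (|f τ| * exp (-(t - τ) * θ ^ 2)) :=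
      setIntegral_congr_fun measurableSet_Ioi fun θ hθ => by
        rw [norm_mul, norm_mul, norm_of_nonneg (rpow_nonneg hθ.le _),
          norm_of_nonneg (exp_pos _).le, norm_eq_abs]
    rw [hnorm, integral_Ioi_rpow_mul_const_mul_exp_neg_mul_sq hα1 (sub_pos.2 hτ.2), norm_mul,
      norm_of_nonneg (rpow_nonneg (sub_pos.2 hτ.2).le _), norm_eq_abs]
    ring

lemma integrableOn_Ioi_rpow_mul_integral_exp (hα0 : 0 < α) (hα1 : α < 1) (ht : 0 ≤ t)
    (hf : Continuous f) :
    IntegrableOn (fun θ => θ ^ (1 - 2 * α) * ∫ τ in 0..t, f τ * exp (-(t - τ) * θ ^ 2))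
      (Ioi 0) := by
  refine (integrable_prod_diffusive hα0 hα1 ht hf).integral_prod_left.congr
    (ae_of_all _ fun θ => ?_)
  dsimp only
  rw [intervalIntegral.integral_of_le ht, integral_Ioc_eq_integral_Ioo, integral_const_mul]

lemma integral_Ioi_rpow_mul_integral_exp (hα0 : 0 < α) (hα1 : α < 1) (ht : 0 ≤ t)
    (hf : Continuous f) :
    ∫ θ in Ioi 0, θ ^ (1 - 2 * α) * ∫ τ in 0..t, f τ * exp (-(t - τ) * θ ^ 2) =
      Gamma (1 - α) / 2 * ∫ τ in 0..t, (t - τ) ^ (α - 1) * f τ := by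
  simp only [intervalIntegral.integral_of_le ht, integral_Ioc_eq_integral_Ioo,
    ← integral_const_mul]
  calc ∫ θ in Ioi 0, ∫ τ in Ioo 0 t, θ ^ (1 - 2 * α) * (f τ * exp (-(t - τ) * θ ^ 2))
      = ∫ τ in Ioo 0 t, ∫ θ in Ioi 0, θ ^ (1 - 2 * α) * (f τ * exp (-(t - τ) * θ ^ 2)) :=
        integral_integral_swap (integrable_prod_diffusive hα0 hα1 ht hf)
    _ = ∫ τ in Ioo 0 t, Gamma (1 - α) / 2 * ((t - τ) ^ (α - 1) * f τ) :=
        setIntegral_congr_fun measurableSet_Ioo fun τ hτ => by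
          rw [integral_Ioi_rpow_mul_const_mul_exp_neg_mul_sq hα1 (sub_pos.2 hτ.2)]
          ring

end Diffusive

theorem stmt_8_general (α : ℝ) (hα0 : 0 < α) (hα1 : α < 1) (σ : ℝ → ℝ)
    (hσ : ContDiff ℝ 1 σ)
    (φ : ℝ → ℝ → ℝ)
    (hφ : ∀ t θ : ℝ, φ t θ =
      (2 * Real.sin (Real.pi * α) / Real.pi) * θ ^ (1 - 2 * α) *
        ∫ τ in (0 : ℝ)..t, deriv σ τ * Real.exp (-(t - τ) * θ ^ 2)) :
    ∀ t : ℝ, 0 < t →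
      IntegrableOn (fun θ => φ t θ) (Set.Ioi (0 : ℝ)) ∧
      ∫ θ in Set.Ioi (0 : ℝ), φ t θ =
        (1 / Real.Gamma α) * ∫ τ in (0 : ℝ)..t, (t - τ) ^ (α - 1) * deriv σ τ := by
  intro t ht
  have hf : Continuous (deriv σ) := hσ.continuous_deriv le_rfl
  have hsin : sin (π * α) ≠ 0 :=
    (sin_pos_of_pos_of_lt_pi (by positivity) (by nlinarith [pi_pos])).ne'
  simp_rw [hφ, mul_assoc]
  refine ⟨(integrableOn_Ioi_rpow_mul_integral_exp hα0 hα1 ht.le hf).const_mul _, ?_⟩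
  rw [integral_const_mul, integral_Ioi_rpow_mul_integral_exp hα0 hα1 ht.le hf, ← mul_assoc,
    two_mul_sin_div_pi_mul_Gamma_one_sub hsin]

theorem stmt_8 (α : ℝ) (hα0 : 0 < α) (hα1 : α < 1) (σ : ℝ → ℝ)
    (hσ : ContDiff ℝ 1 σ) (hσ0 : σ 0 = 0)
    (φ : ℝ → ℝ → ℝ)
    (hφ : ∀ t θ : ℝ, φ t θ =
      (2 * Real.sin (Real.pi * α) / Real.pi) * θ ^ (1 - 2 * α) *
        ∫ τ in (0 : ℝ)..t, deriv σ τ * Real.exp (-(t - τ) * θ ^ 2)) :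
    ∀ t : ℝ, 0 < t →
      IntegrableOn (fun θ => φ t θ) (Set.Ioi (0 : ℝ)) ∧
      ∫ θ in Set.Ioi (0 : ℝ), φ t θ =
        (1 / Real.Gamma α) * ∫ τ in (0 : ℝ)..t, (t - τ) ^ (α - 1) * deriv σ τ :=
  stmt_8_general α hα0 hα1 σ hσ φ hφ
end

section
/- For every real α with 0 < α < 1 and every real ω > 0, the complex-valued improper integral converges and (2 sin(πα)/π) ∫₀^{+∞} θ^{1−2α} / (θ² + iω) dθ = ω^{−α} ( cos(πα/2) − i sin(πα/2) ), i.e. it equals (iω)^{−α} for the principal branch of the complex power. -/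
/-!
Since `1 / (θ² + iω) = (θ² - iω) / (θ⁴ + ω²)`, the integral splits into the two real integrals
`∫ θ^(s-1) / (θ⁴ + ω²)` with `s = 4 - 2α` and `s = 2 - 2α`. The substitution `x = θ⁴` and a scaling
reduce both to `∫₀^∞ x^(s-1) / (1 + x) dx = π / sin (π s)`, which is Fubini applied to
`x^(s-1) e^(-(1+x) t)` followed by the reflection formula `Γ(s) Γ(1 - s) = π / sin (π s)`.
The duplication formula `sin (π α) = 2 sin (π α / 2) cos (π α / 2)` then collapses the constants.
Integrability is never bounded by hand: a Bochner integral with a nonzero value is that of an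
integrable function.
-/

open MeasureTheory Set Real

section MellinIntegrals

variable {s : ℝ}

theorem sin_pi_mul_div_pos {p : ℝ} (hp : 0 < p) (hs0 : 0 < s) (hsp : s < p) :
    0 < sin (π * s / p) :=
  sin_pos_of_pos_of_lt_pi (by positivity) (by rw [div_lt_iff₀ hp]; nlinarith [pi_pos])

theorem integral_rpow_div_one_add (hs0 : 0 < s) (hs1 : s < 1) :
    ∫ x in Ioi 0, x ^ (s - 1) / (1 + x) = π / sin (π * s) := by
  set μ := volume.restrict (Ioi (0 : ℝ))
  set F : ℝ → ℝ → ℝ := fun x t => x ^ (s - 1) * exp (-((1 + x) * t))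
  have integral_dt : ∀ x ∈ Ioi (0 : ℝ), ∫ t, F x t ∂μ = x ^ (s - 1) / (1 + x) := by
    intro x hx
    have hx1 : 0 < 1 + x := by linarith [mem_Ioi.mp hx]
    simp only [F, μ, integral_const_mul, ← neg_mul, integral_exp_mul_Ioi (neg_neg_of_pos hx1),
      mul_zero, exp_zero, neg_div_neg_eq, mul_one_div]
  have integral_dx : ∀ t ∈ Ioi (0 : ℝ),
      ∫ x, F x t ∂μ = Gamma s * (exp (-t) * t ^ ((1 - s) - 1)) := by
    intro t ht
    have hsplit : ∀ x, F x t = exp (-t) * (x ^ (s - 1) * exp (-(t * x))) := fun x => by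
      simp only [F]; rw [mul_left_comm, ← exp_add]; ring_nf
    simp only [μ, hsplit, integral_const_mul, integral_rpow_mul_exp_neg_mul_Ioi hs0 ht,
      one_div, inv_rpow (le_of_lt ht), ← rpow_neg (le_of_lt ht)]
    ring_nf
  have hF : Integrable (Function.uncurry F) (μ.prod μ) := by
    refine (integrable_prod_iff' (by fun_prop)).2 ⟨?_, ?_⟩
    · filter_upwards [ae_restrict_mem measurableSet_Ioi] with t ht
      refine Integrable.of_integral_ne_zero (f := fun x => F x t) ?_
      rw [integral_dx t ht]
      have := Gamma_pos_of_pos hs0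
      have ht0 : 0 < t := ht
      positivity
    · refine ((GammaIntegral_convergent (by linarith : 0 < 1 - s)).const_mul (Gamma s)).congr ?_
      filter_upwards [ae_restrict_mem measurableSet_Ioi] with t ht
      rw [← integral_dx t ht]
      refine setIntegral_congr_fun measurableSet_Ioi fun x hx => ?_
      have hx0 : 0 < x := hx
      exact (norm_of_nonneg (by positivity : 0 ≤ F x t)).symm
  calc ∫ x in Ioi 0, x ^ (s - 1) / (1 + x) = ∫ x, ∫ t, F x t ∂μ ∂μ :=
        (setIntegral_congr_fun measurableSet_Ioi integral_dt).symm
    _ = ∫ t, ∫ x, F x t ∂μ ∂μ := integral_integral_swap hF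
    _ = ∫ t in Ioi 0, Gamma s * (exp (-t) * t ^ ((1 - s) - 1)) :=
        setIntegral_congr_fun measurableSet_Ioi integral_dx
    _ = Gamma s * Gamma (1 - s) := by
        rw [integral_const_mul, Gamma_eq_integral (s := 1 - s) (by linarith)]
    _ = π / sin (π * s) := Gamma_mul_Gamma_one_sub s

theorem integral_rpow_div_rpow_add_one {p : ℝ} (hp : 0 < p) (hs0 : 0 < s) (hsp : s < p) :
    ∫ x in Ioi 0, x ^ (s - 1) / (x ^ p + 1) = π / (p * sin (π * s / p)) := by
  have key := integral_comp_rpow_Ioi_of_pos (g := fun y : ℝ => y ^ (s / p - 1) / (1 + y)) hp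
  have hpt : ∀ x ∈ Ioi (0 : ℝ), (p * x ^ (p - 1)) • ((x ^ p) ^ (s / p - 1) / (1 + x ^ p)) =
      p * (x ^ (s - 1) / (x ^ p + 1)) := by
    intro x hx
    have hx0 : 0 < x := hx
    have hexp : x ^ (p - 1) * x ^ (p * (s / p - 1)) = x ^ (s - 1) := by
      rw [← rpow_add hx0]; congr 1; field_simp; ring
    rw [smul_eq_mul, ← rpow_mul hx0.le, mul_div_assoc', mul_assoc p, hexp, add_comm (x ^ p)]
    ring
  rw [setIntegral_congr_fun measurableSet_Ioi hpt, integral_const_mul,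
    integral_rpow_div_one_add (div_pos hs0 hp) ((div_lt_one hp).2 hsp)] at key
  have hsin := sin_pi_mul_div_pos hp hs0 hsp
  rw [← mul_div_assoc, eq_div_iff hsin.ne'] at key
  rw [eq_div_iff (by positivity)]
  linear_combination key

theorem integral_rpow_div_rpow_add {p c : ℝ} (hp : 0 < p) (hs0 : 0 < s) (hsp : s < p)
    (hc : 0 < c) :
    ∫ x in Ioi 0, x ^ (s - 1) / (x ^ p + c) = c ^ (s / p - 1) * (π / (p * sin (π * s / p))) := by
  set b := c ^ p⁻¹
  have hb : 0 < b := by positivity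
  have hbp : b ^ p = c := rpow_inv_rpow hc.le hp.ne'
  have key := integral_comp_mul_left_Ioi (fun x => x ^ (s - 1) / (x ^ p + c)) 0 hb
  have hpt : ∀ x ∈ Ioi (0 : ℝ), (b * x) ^ (s - 1) / ((b * x) ^ p + c) =
      b ^ (s - 1) / c * (x ^ (s - 1) / (x ^ p + 1)) := by
    intro x hx
    have hx0 : 0 < x := hx
    rw [mul_rpow hb.le hx0.le, mul_rpow hb.le hx0.le, hbp]
    field_simp
  rw [setIntegral_congr_fun measurableSet_Ioi hpt, integral_const_mul,
    integral_rpow_div_rpow_add_one hp hs0 hsp, mul_zero, smul_eq_mul] at key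
  have hbs : b ^ s = c ^ (s / p) := by rw [← rpow_mul hc.le]; ring_nf
  rw [rpow_sub_one hb.ne', eq_inv_mul_iff_mul_eq₀ hb.ne'] at key
  rw [rpow_sub_one hc.ne', ← hbs, ← key]
  field_simp

theorem integral_rpow_div_pow_four_add_sq {ω : ℝ} (hs0 : 0 < s) (hs4 : s < 4) (hω : 0 < ω) :
    ∫ θ in Ioi 0, θ ^ (s - 1) / (θ ^ 4 + ω ^ 2) =
      ω ^ (s / 2 - 2) * (π / (4 * sin (π * s / 4))) := by
  have h := integral_rpow_div_rpow_add (by norm_num : (0 : ℝ) < 4) hs0 hs4 (pow_pos hω 2)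
  rw [← rpow_natCast_mul hω.le] at h
  norm_num at h
  rw [h]
  congr 2
  ring

end MellinIntegrals

section

variable {α ω : ℝ}

theorem integral_rpow_mul_sq_div_pow_four_add_sq (hα0 : 0 < α) (hα2 : α < 2) (hω : 0 < ω) :
    ∫ θ in Ioi 0, θ ^ (1 - 2 * α) * θ ^ 2 / (θ ^ 4 + ω ^ 2) =
      ω ^ (-α) * (π / (4 * sin (π * α / 2))) := by
  have h := integral_rpow_div_pow_four_add_sq (s := 4 - 2 * α) (by linarith) (by linarith) hω
  rw [show (4 - 2 * α) / 2 - 2 = -α by ring, show π * (4 - 2 * α) / 4 = π - π * α / 2 by ring,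
    sin_pi_sub] at h
  rw [← h]
  refine setIntegral_congr_fun measurableSet_Ioi fun θ hθ => ?_
  rw [← rpow_add_natCast (ne_of_gt hθ)]
  norm_num
  ring_nf

theorem integral_rpow_one_sub_two_mul_div_pow_four_add_sq (hα0 : -1 < α) (hα1 : α < 1)
    (hω : 0 < ω) :
    ∫ θ in Ioi 0, θ ^ (1 - 2 * α) / (θ ^ 4 + ω ^ 2) =
      ω ^ (-α - 1) * (π / (4 * cos (π * α / 2))) := by
  have h := integral_rpow_div_pow_four_add_sq (s := 2 - 2 * α) (by linarith) (by linarith) hω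
  rwa [show 2 - 2 * α - 1 = 1 - 2 * α by ring, show (2 - 2 * α) / 2 - 2 = -α - 1 by ring,
    show π * (2 - 2 * α) / 4 = π / 2 - π * α / 2 by ring, sin_pi_div_two_sub] at h

end

theorem ofReal_div_sq_add_I_mul (u θ ω : ℝ) (hω : ω ≠ 0) :
    (u : ℂ) / ((θ : ℂ) ^ 2 + Complex.I * ω) =
      ((u * θ ^ 2 / (θ ^ 4 + ω ^ 2) : ℝ) : ℂ) -
        Complex.I * ((ω * (u / (θ ^ 4 + ω ^ 2)) : ℝ) : ℂ) := by
  have hden : (θ : ℂ) ^ 2 + Complex.I * ω ≠ 0 := fun h =>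
    hω (by simpa [← Complex.ofReal_pow] using congrArg Complex.im h)
  have hden' : (θ : ℂ) ^ 4 + (ω : ℂ) ^ 2 ≠ 0 := by
    exact_mod_cast (by positivity : θ ^ 4 + ω ^ 2 ≠ 0)
  rw [div_eq_iff hden]
  push_cast
  field_simp
  ring_nf
  rw [Complex.I_sq]
  ring

theorem integral_ofReal_sub_I_mul_ofReal {X : Type*} [MeasurableSpace X] {μ : Measure X}
    {f g : X → ℝ} (hf : Integrable f μ) (hg : Integrable g μ) :
    ∫ x, ((f x : ℂ) - Complex.I * g x) ∂μ = (∫ x, f x ∂μ : ℝ) - Complex.I * (∫ x, g x ∂μ : ℝ) := by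
  rw [integral_sub hf.ofReal (hg.ofReal.const_mul _), integral_const_mul, integral_complex_ofReal,
    integral_complex_ofReal]

theorem stmt_10 (α ω : ℝ) (hα0 : 0 < α) (hα1 : α < 1) (hω : 0 < ω) :
    IntegrableOn (fun θ : ℝ => ((θ ^ (1 - 2 * α) : ℝ) : ℂ) / ((θ : ℂ) ^ 2 + Complex.I * ω))
      (Set.Ioi (0 : ℝ)) ∧
    ((2 * Real.sin (Real.pi * α) / Real.pi : ℝ) : ℂ) *
      ∫ θ in Set.Ioi (0 : ℝ), ((θ ^ (1 - 2 * α) : ℝ) : ℂ) / ((θ : ℂ) ^ 2 + Complex.I * ω) =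
    ((ω ^ (-α) : ℝ) : ℂ) *
      ((Real.cos (Real.pi * α / 2) : ℂ) - Complex.I * (Real.sin (Real.pi * α / 2) : ℂ)) := by
  have hI₁ := integral_rpow_mul_sq_div_pow_four_add_sq hα0 (by linarith) hω
  have hI₂ := integral_rpow_one_sub_two_mul_div_pow_four_add_sq (by linarith) hα1 hω
  have hsin : 0 < sin (π * α / 2) := sin_pi_mul_div_pos two_pos hα0 (by linarith)
  have hcos : 0 < cos (π * α / 2) :=
    cos_pos_of_mem_Ioo ⟨by nlinarith [pi_pos], by nlinarith [pi_pos]⟩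
  have hint₁ : IntegrableOn (fun θ => θ ^ (1 - 2 * α) * θ ^ 2 / (θ ^ 4 + ω ^ 2)) (Ioi 0) :=
    .of_integral_ne_zero (by rw [hI₁]; positivity)
  have hint₂ : IntegrableOn (fun θ => ω * (θ ^ (1 - 2 * α) / (θ ^ 4 + ω ^ 2))) (Ioi 0) :=
    (Integrable.of_integral_ne_zero (by rw [hI₂]; positivity)).const_mul ω
  simp only [ofReal_div_sq_add_I_mul _ _ _ hω.ne']
  refine ⟨hint₁.ofReal.sub (hint₂.ofReal.const_mul _), ?_⟩
  rw [integral_ofReal_sub_I_mul_ofReal hint₁ hint₂, integral_const_mul, hI₁, hI₂]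
  have hdup : sin (π * α) = 2 * sin (π * α / 2) * cos (π * α / 2) := by
    rw [← sin_two_mul]; ring_nf
  have hre : 2 * sin (π * α) / π * (ω ^ (-α) * (π / (4 * sin (π * α / 2)))) =
      ω ^ (-α) * cos (π * α / 2) := by
    rw [hdup]; field_simp; ring
  have him : 2 * sin (π * α) / π * (ω * (ω ^ (-α - 1) * (π / (4 * cos (π * α / 2))))) =
      ω ^ (-α) * sin (π * α / 2) := by
    rw [← mul_assoc ω, mul_comm ω, ← rpow_add_one hω.ne', sub_add_cancel, hdup]; field_simp; ring
  rw [mul_sub, mul_left_comm _ Complex.I, ← Complex.ofReal_mul, ← Complex.ofReal_mul, hre, him]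
  push_cast
  ring
end

section
/- Let ρ, J_u, η, A > 0 and 0 < α < 1, and for ω > 0 let N(ω) = J_u − i/(η ω) + A Γ(1+α) ω^{−α} (cos(πα/2) − i sin(πα/2)) be the Andrade complex compliance, and let c(ω) = √( 2 / ( ρ ( |N(ω)| + Re N(ω) ) ) ) be the phase velocity. Then c(ω) → 0 as ω → 0⁺, and c(ω) → 1/√(ρ J_u) as ω → +∞. -/
/-!
At low frequency the real part of the Andrade compliance blows up like `ω ^ (-α)` (its coefficient
`A Γ(1+α) cos(πα/2)` is positive because `0 < α < 1`), and `‖N‖ + Re N ≥ 2 Re N`, so the phase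
velocity tends to `0`. At high frequency both the viscous term `i/(ηω)` and the transient term
vanish, so `N(ω) → J_u` in `ℂ`, and the phase velocity, being continuous at `J_u`, tends to
`√(2/(ρ · 2 J_u)) = 1/√(ρ J_u)`.
-/

open Filter Topology Complex

noncomputable section

def phaseVelocity (ρ : ℝ) (z : ℂ) : ℝ := √(2 / (ρ * (‖z‖ + z.re)))

section PhaseVelocity

variable {ρ : ℝ}

theorem tendsto_phaseVelocity_zero {ι : Type*} {l : Filter ι} {f : ι → ℂ} (hρ : 0 < ρ)
    (hf : Tendsto (fun i => (f i).re) l atTop) :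
    Tendsto (fun i => phaseVelocity ρ (f i)) l (𝓝 0) := by
  have hsum : Tendsto (fun i => ‖f i‖ + (f i).re) l atTop :=
    tendsto_atTop_mono (fun i => by linarith [re_le_norm (f i)]) (hf.const_mul_atTop two_pos)
  have hquot : Tendsto (fun i => 2 / (ρ * (‖f i‖ + (f i).re))) l (𝓝 0) :=
    tendsto_const_nhds.div_atTop (hsum.const_mul_atTop hρ)
  rw [← Real.sqrt_zero]
  exact (Real.continuous_sqrt.tendsto 0).comp hquot

theorem continuousAt_phaseVelocity (hρ : ρ ≠ 0) {z : ℂ} (hz : 0 < z.re) :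
    ContinuousAt (phaseVelocity ρ) z := by
  have hpos : 0 < ‖z‖ + z.re := by linarith [re_le_norm z]
  unfold phaseVelocity
  fun_prop (disch := positivity)

theorem phaseVelocity_ofReal (hρ : ρ ≠ 0) {J : ℝ} (hJ : 0 < J) :
    phaseVelocity ρ J = 1 / √(ρ * J) := by
  rw [phaseVelocity, norm_real, Real.norm_of_nonneg hJ.le, ofReal_re, one_div, ← Real.sqrt_inv]
  congr 1
  field_simp
  norm_num

end PhaseVelocity

/-- `K` plays the role of `A Γ(1+α)`. -/
def andradeCompliance (Ju η K α ω : ℝ) : ℂ :=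
  (Ju : ℂ) - I / ((η : ℂ) * (ω : ℂ))
    + ((K * ω ^ (-α) : ℝ) : ℂ)
      * ((Real.cos (Real.pi * α / 2) : ℂ) - I * (Real.sin (Real.pi * α / 2) : ℂ))

section Andrade

variable {Ju η K α : ℝ}

theorem andradeCompliance_re (ω : ℝ) :
    (andradeCompliance Ju η K α ω).re = Ju + K * ω ^ (-α) * Real.cos (Real.pi * α / 2) := by
  simp [andradeCompliance, div_re, -ofReal_cos, -ofReal_sin]

theorem tendsto_andradeCompliance_re_nhdsGT_zero (hK : 0 < K) (hα0 : 0 < α) (hα1 : α < 1) :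
    Tendsto (fun ω => (andradeCompliance Ju η K α ω).re) (𝓝[>] 0) atTop := by
  have hcos : 0 < Real.cos (Real.pi * α / 2) := by
    apply Real.cos_pos_of_mem_Ioo
    constructor <;> nlinarith [Real.pi_pos]
  simp only [andradeCompliance_re]
  exact tendsto_atTop_add_const_left _ _
    (((tendsto_rpow_neg_nhdsGT_zero (neg_lt_zero.2 hα0)).const_mul_atTop hK).atTop_mul_const hcos)

theorem tendsto_andradeCompliance_atTop (hα : 0 < α) :
    Tendsto (andradeCompliance Ju η K α) atTop (𝓝 Ju) := by
  have hinv : Tendsto (fun ω : ℝ => (ω : ℂ)⁻¹) atTop (𝓝 0) := by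
    simpa [Function.comp_def] using (continuous_ofReal.tendsto 0).comp tendsto_inv_atTop_zero
  have hvisc : Tendsto (fun ω : ℝ => I / ((η : ℂ) * (ω : ℂ))) atTop (𝓝 0) := by
    simpa using (hinv.const_mul (I / η)).congr fun ω => by
      rw [div_mul_eq_div_div, div_eq_mul_inv (I / η)]
  have htrans : Tendsto (fun ω : ℝ => ((K * ω ^ (-α) : ℝ) : ℂ)) atTop (𝓝 0) := by
    simpa [Function.comp_def] using
      (continuous_ofReal.tendsto _).comp ((tendsto_rpow_neg_atTop hα).const_mul K)
  have hlim := (tendsto_const_nhds (x := (Ju : ℂ))).sub hvisc |>.add (htrans.mul_const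
    ((Real.cos (Real.pi * α / 2) : ℂ) - I * (Real.sin (Real.pi * α / 2) : ℂ)))
  rwa [sub_zero, zero_mul, add_zero] at hlim

end Andrade

end

theorem stmt_11_general (ρ Ju η A α : ℝ) (hρ : 0 < ρ) (hJ : 0 < Ju) (hA : 0 < A)
    (hα0 : 0 < α) (hα1 : α < 1) (N : ℝ → ℂ) (c : ℝ → ℝ)
    (hN : ∀ ω : ℝ, 0 < ω → N ω =
      (Ju : ℂ) - Complex.I / ((η : ℂ) * (ω : ℂ))
        + ((A * Real.Gamma (1 + α) * ω ^ (-α) : ℝ) : ℂ)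
          * ((Real.cos (Real.pi * α / 2) : ℂ) - Complex.I * (Real.sin (Real.pi * α / 2) : ℂ)))
    (hc : ∀ ω : ℝ, 0 < ω →
      c ω = Real.sqrt (2 / (ρ * (‖N ω‖ + (N ω).re)))) :
    Tendsto c (nhdsWithin 0 (Set.Ioi 0)) (nhds 0) ∧
    Tendsto c atTop (nhds (1 / Real.sqrt (ρ * Ju))) := by
  set K := A * Real.Gamma (1 + α)
  have hK : 0 < K := mul_pos hA (Real.Gamma_pos_of_pos (by linarith))
  have hcN : ∀ ω, 0 < ω → c ω = phaseVelocity ρ (andradeCompliance Ju η K α ω) := fun ω hω => by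
    rw [hc ω hω, hN ω hω]; rfl
  constructor
  · refine (tendsto_phaseVelocity_zero hρ
      (tendsto_andradeCompliance_re_nhdsGT_zero (Ju := Ju) (η := η) hK hα0 hα1)).congr' ?_
    filter_upwards [self_mem_nhdsWithin] with ω hω using (hcN ω hω).symm
  · have hlim := (continuousAt_phaseVelocity hρ.ne' (z := Ju) (by simpa using hJ)).tendsto.comp
      (tendsto_andradeCompliance_atTop (η := η) (K := K) hα0)
    rw [phaseVelocity_ofReal hρ.ne' hJ] at hlim
    refine hlim.congr' ?_
    filter_upwards [eventually_gt_atTop 0] with ω hω using (hcN ω hω).symm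

theorem stmt_11 (ρ Ju η A α : ℝ) (hρ : 0 < ρ) (hJ : 0 < Ju) (hη : 0 < η) (hA : 0 < A)
    (hα0 : 0 < α) (hα1 : α < 1) (N : ℝ → ℂ) (c : ℝ → ℝ)
    (hN : ∀ ω : ℝ, 0 < ω → N ω =
      (Ju : ℂ) - Complex.I / ((η : ℂ) * (ω : ℂ))
        + ((A * Real.Gamma (1 + α) * ω ^ (-α) : ℝ) : ℂ)
          * ((Real.cos (Real.pi * α / 2) : ℂ) - Complex.I * (Real.sin (Real.pi * α / 2) : ℂ)))
    (hc : ∀ ω : ℝ, 0 < ω →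
      c ω = Real.sqrt (2 / (ρ * (‖N ω‖ + (N ω).re)))) :
    Tendsto c (nhdsWithin 0 (Set.Ioi 0)) (nhds 0) ∧
    Tendsto c atTop (nhds (1 / Real.sqrt (ρ * Ju))) :=
  stmt_11_general ρ Ju η A α hρ hJ hA hα0 hα1 N c hN hc
end

section
/- Let ρ, J_u, η, A > 0 and 0 < α < 1, and for ω > 0 let N(ω) = J_u − i/(η ω) + A Γ(1+α) ω^{−α} (cos(πα/2) − i sin(πα/2)) be the Andrade complex compliance, and let ζ(ω) = ω √( ρ ( |N(ω)| − Re N(ω) ) / 2 ) be the attenuation. Then the attenuation is sublinear at high frequency: ζ(ω)/ω → 0 as ω → +∞, i.e. ζ(ω) = o(ω) as ω → +∞. -/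
/-!
Both the viscous term `i / (η ω)` and the transient term `ω^(-α)` vanish at high frequency, so
`N(ω)` tends to the positive real `J_u`. Then `|N(ω)|` and `Re N(ω)` both tend to `J_u`, hence
`ζ(ω) / ω = √(ρ (|N(ω)| - Re N(ω)) / 2) → 0`.
-/

open Filter Topology

theorem Complex.tendsto_norm_sub_re_of_tendsto_ofReal {ι : Type*} {l : Filter ι} {f : ι → ℂ}
    {x : ℝ} (hx : 0 ≤ x) (hf : Tendsto f l (𝓝 (x : ℂ))) :
    Tendsto (fun i => ‖f i‖ - (f i).re) l (𝓝 0) := by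
  have hnorm : Tendsto (fun i => ‖f i‖) l (𝓝 x) := by
    simpa [abs_of_nonneg hx] using hf.norm
  have hre : Tendsto (fun i => (f i).re) l (𝓝 x) := (Complex.continuous_re.tendsto _).comp hf
  simpa using hnorm.sub hre

theorem Complex.tendsto_ofReal_inv_atTop : Tendsto (fun ω : ℝ => (ω : ℂ)⁻¹) atTop (𝓝 0) := by
  simpa using (tendsto_inv_atTop_zero (𝕜 := ℝ)).ofReal

theorem tendsto_andrade_compliance_atTop (J η B α : ℝ) (z : ℂ) (hα : 0 < α) :
    Tendsto (fun ω : ℝ => (J : ℂ) - Complex.I / ((η : ℂ) * (ω : ℂ)) + ((B * ω ^ (-α) : ℝ) : ℂ) * z)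
      atTop (𝓝 (J : ℂ)) := by
  have hviscous : Tendsto (fun ω : ℝ => Complex.I / ((η : ℂ) * (ω : ℂ))) atTop (𝓝 0) := by
    simpa [div_eq_mul_inv] using
      (Complex.tendsto_ofReal_inv_atTop.mul_const (η : ℂ)⁻¹).const_mul Complex.I
  have htransient : Tendsto (fun ω : ℝ => ((B * ω ^ (-α) : ℝ) : ℂ)) atTop (𝓝 0) := by
    simpa using ((tendsto_rpow_neg_atTop hα).const_mul B).ofReal
  simpa using (tendsto_const_nhds.sub hviscous).add (htransient.mul_const z)

theorem stmt_13_general (ρ Ju η A α : ℝ) (hJ : 0 < Ju)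
    (hα0 : 0 < α) (N : ℝ → ℂ) (ζ : ℝ → ℝ)
    (hN : ∀ ω : ℝ, 0 < ω → N ω =
      (Ju : ℂ) - Complex.I / ((η : ℂ) * (ω : ℂ))
        + ((A * Real.Gamma (1 + α) * ω ^ (-α) : ℝ) : ℂ)
          * ((Real.cos (Real.pi * α / 2) : ℂ) - Complex.I * (Real.sin (Real.pi * α / 2) : ℂ)))
    (hζ : ∀ ω : ℝ, 0 < ω →
      ζ ω = ω * Real.sqrt (ρ * (‖N ω‖ - (N ω).re) / 2)) :
    Tendsto (fun ω => ζ ω / ω) atTop (nhds 0) := by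
  have hNlim : Tendsto N atTop (𝓝 (Ju : ℂ)) :=
    (tendsto_andrade_compliance_atTop Ju η (A * Real.Gamma (1 + α)) α _ hα0).congr'
      (eventually_gt_atTop 0 |>.mono fun ω hω => (hN ω hω).symm)
  have hsqrt : Tendsto (fun ω => Real.sqrt (ρ * (‖N ω‖ - (N ω).re) / 2)) atTop (𝓝 0) := by
    have hgap := Complex.tendsto_norm_sub_re_of_tendsto_ofReal hJ.le hNlim
    simpa using ((hgap.const_mul ρ).div_const 2).sqrt
  refine hsqrt.congr' (eventually_gt_atTop 0 |>.mono fun ω hω => ?_)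
  dsimp only
  rw [hζ ω hω, mul_div_cancel_left₀ _ hω.ne']

theorem stmt_13 (ρ Ju η A α : ℝ) (hρ : 0 < ρ) (hJ : 0 < Ju) (hη : 0 < η) (hA : 0 < A)
    (hα0 : 0 < α) (hα1 : α < 1) (N : ℝ → ℂ) (ζ : ℝ → ℝ)
    (hN : ∀ ω : ℝ, 0 < ω → N ω =
      (Ju : ℂ) - Complex.I / ((η : ℂ) * (ω : ℂ))
        + ((A * Real.Gamma (1 + α) * ω ^ (-α) : ℝ) : ℂ)
          * ((Real.cos (Real.pi * α / 2) : ℂ) - Complex.I * (Real.sin (Real.pi * α / 2) : ℂ)))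
    (hζ : ∀ ω : ℝ, 0 < ω →
      ζ ω = ω * Real.sqrt (ρ * (‖N ω‖ - (N ω).re) / 2)) :
    Tendsto (fun ω => ζ ω / ω) atTop (nhds 0) :=
  stmt_13_general ρ Ju η A α hJ hα0 N ζ hN hζ
end
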